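/- arXiv:1910.14553 — 9 statements merged into one kernel-verified Lean document; each statement's English description precedes it below -/
import Mathlib

section
/- Strict monotonicity of the nullcline function: assume 0 < φ ≤ 1, 0 < μ ≤ ψ, ω > 0, 0 < c < 1, and that at least one of φ < 1 or μ < ψ holds. Then the function K(R) = k_sm(R)/c − k_ms(R)/(1−c) is strictly decreasing on [0, ∞). -/
open Real Filter

/-- Nondimensional stationary-to-moving switching rate. -/
noncomputable def ksm (φ R : ℝ) : ℝ := φ - (φ - 1) * Real.exp (-R)

/-- Nondimensional moving-to-stationary switching rate. -/
noncomputable def kms (ψ μ ω R : ℝ) : ℝ := ψ - (ψ - μ) * Real.exp (-ω * R)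

/-- Nullcline function K(R) = k_sm(R)/c − k_ms(R)/(1−c). -/
noncomputable def Kfun (φ ψ μ ω c R : ℝ) : ℝ := ksm φ R / c - kms ψ μ ω R / (1 - c)

/-- Strict monotonicity of the nullcline function: K is strictly decreasing on [0, ∞). -/
theorem nullcline_strictAnti (φ ψ μ ω c : ℝ)
    (hφ0 : 0 < φ) (hφ1 : φ ≤ 1) (hμ0 : 0 < μ) (hμψ : μ ≤ ψ) (hω : 0 < ω)
    (hc0 : 0 < c) (hc1 : c < 1) (hne : φ < 1 ∨ μ < ψ) :
    StrictAntiOn (Kfun φ ψ μ ω c) (Set.Ici (0 : ℝ)) := by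
  intro a ha b hb hab
  have h1c : (0:ℝ) < 1 - c := by linarith
  have h1 : Real.exp (-b) < Real.exp (-a) := Real.exp_lt_exp.mpr (by linarith)
  have h2 : Real.exp (-(ω*b)) < Real.exp (-(ω*a)) := Real.exp_lt_exp.mpr (by nlinarith)
  simp only [Kfun, ksm, kms, neg_mul] at *
  rw [div_sub_div _ _ hc0.ne' h1c.ne', div_sub_div _ _ hc0.ne' h1c.ne',
    div_lt_div_iff₀ (by positivity) (by positivity)]
  rcases hne with h | h
  · nlinarith [mul_nonneg (sub_nonneg.mpr hμψ) (sub_nonneg.mpr h2.le),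
      mul_pos (mul_pos hc0 h1c) (mul_pos (sub_pos.mpr h) (sub_pos.mpr h1)),
      mul_nonneg (mul_nonneg hc0.le hc0.le) (mul_nonneg (sub_nonneg.mpr hμψ) (sub_nonneg.mpr h2.le))]
  · nlinarith [mul_pos (mul_pos hc0 hc0) (mul_pos (sub_pos.mpr h) (sub_pos.mpr h2)),
      mul_nonneg (mul_nonneg h1c.le h1c.le) (mul_nonneg (sub_nonneg.mpr hφ1) (sub_nonneg.mpr h1.le))]
end

section
/- Existence and uniqueness of the vertical nullcline: assume 0 < φ ≤ 1, 0 < μ ≤ ψ, ω > 0, at least one of φ < 1 or μ < ψ, and that the speed c satisfies φ/(φ+ψ) < c < 1/(1+μ). Then K(0) > 0, lim_{R→∞} K(R) = φ/c − ψ/(1−c) < 0, and there exists a unique R* ∈ (0, ∞) with K(R*) = 0; moreover K(R) > 0 for 0 ≤ R < R* and K(R) < 0 for R > R*. -/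
open Real Filter

/-- Existence and uniqueness of the vertical nullcline: K(0) > 0, K(∞) = φ/c − ψ/(1−c) < 0,
and there is a unique R* ∈ (0, ∞) with K(R*) = 0; K is positive before R* and negative after. -/
theorem nullcline_exists_unique (φ ψ μ ω c : ℝ)
    (hφ0 : 0 < φ) (hφ1 : φ ≤ 1) (hμ0 : 0 < μ) (hμψ : μ ≤ ψ) (hω : 0 < ω)
    (hne : φ < 1 ∨ μ < ψ)
    (hclow : φ / (φ + ψ) < c) (hchigh : c < 1 / (1 + μ)) :
    0 < Kfun φ ψ μ ω c 0 ∧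
    Tendsto (Kfun φ ψ μ ω c) atTop (nhds (φ / c - ψ / (1 - c))) ∧
    φ / c - ψ / (1 - c) < 0 ∧
    ∃ Rs : ℝ, 0 < Rs ∧ Kfun φ ψ μ ω c Rs = 0 ∧
      (∀ R', 0 < R' → Kfun φ ψ μ ω c R' = 0 → R' = Rs) ∧
      (∀ R, 0 ≤ R → R < Rs → 0 < Kfun φ ψ μ ω c R) ∧
      (∀ R, Rs < R → Kfun φ ψ μ ω c R < 0) := by
  have hψ0 : 0 < ψ := lt_of_lt_of_le hμ0 hμψ
  have hsum : 0 < φ + ψ := by linarith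
  have hc0 : 0 < c := lt_trans (div_pos hφ0 hsum) hclow
  have hc1 : c < 1 := by
    have h1 : 1 / (1 + μ) < 1 := by
      rw [div_lt_one (by linarith)]; linarith
    linarith
  have h1c : 0 < 1 - c := by linarith
  -- c(1+μ) < 1
  have hcμ : c * (1 + μ) < 1 := by
    rw [lt_div_iff₀ (by linarith : (0:ℝ) < 1 + μ)] at hchigh
    linarith
  -- φ < c(φ+ψ)
  have hφc : φ < c * (φ + ψ) := by
    rw [div_lt_iff₀ hsum] at hclow; linarith
  set A : ℝ := (1 - φ) / c with hA
  set B : ℝ := (ψ - μ) / (1 - c) with hB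
  set L : ℝ := φ / c - ψ / (1 - c) with hL
  have hA0 : 0 ≤ A := div_nonneg (by linarith) hc0.le
  have hB0 : 0 ≤ B := div_nonneg (by linarith) h1c.le
  have hAB : 0 < A ∨ 0 < B := by
    rcases hne with h | h
    · exact Or.inl (div_pos (by linarith) hc0)
    · exact Or.inr (div_pos (by linarith) h1c)
  have hrepr : ∀ R, Kfun φ ψ μ ω c R = A * Real.exp (-R) + B * Real.exp (-ω * R) + L := by
    intro R
    simp only [Kfun, ksm, kms, hA, hB, hL]
    field_simp
    ring
  have hanti : StrictAnti (Kfun φ ψ μ ω c) := by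
    intro x y hxy
    rw [hrepr x, hrepr y]
    have h1 : Real.exp (-y) < Real.exp (-x) := Real.exp_lt_exp.mpr (by linarith)
    have h2 : Real.exp (-ω * y) < Real.exp (-ω * x) := Real.exp_lt_exp.mpr (by nlinarith)
    rcases hAB with h | h
    · nlinarith [mul_le_mul_of_nonneg_left h2.le hB0]
    · nlinarith [mul_le_mul_of_nonneg_left h1.le hA0]
  have hK0 : 0 < Kfun φ ψ μ ω c 0 := by
    have : Kfun φ ψ μ ω c 0 = 1 / c - μ / (1 - c) := by
      simp [Kfun, ksm, kms]
    rw [this, sub_pos, div_lt_div_iff₀ h1c hc0]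
    nlinarith
  have hLneg : L < 0 := by
    rw [hL, sub_neg, div_lt_div_iff₀ hc0 h1c]
    nlinarith
  have htend : Tendsto (Kfun φ ψ μ ω c) atTop (nhds L) := by
    have t1 : Tendsto (fun R : ℝ => Real.exp (-R)) atTop (nhds 0) :=
      Real.tendsto_exp_neg_atTop_nhds_zero
    have t2 : Tendsto (fun R : ℝ => Real.exp (-ω * R)) atTop (nhds 0) := by
      have hm : Tendsto (fun R : ℝ => ω * R) atTop atTop :=
        Filter.Tendsto.const_mul_atTop hω tendsto_id
      have := t1.comp hm
      simpa [Function.comp_def, neg_mul] using this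
    have : Tendsto (fun R => A * Real.exp (-R) + B * Real.exp (-ω * R) + L) atTop
        (nhds (A * 0 + B * 0 + L)) :=
      (((t1.const_mul A).add (t2.const_mul B)).add tendsto_const_nhds)
    simp only [mul_zero, zero_add] at this
    exact this.congr fun R => (hrepr R).symm
  have hcont : Continuous (Kfun φ ψ μ ω c) := by
    have hc' : Continuous (fun R => A * Real.exp (-R) + B * Real.exp (-ω * R) + L) := by
      fun_prop
    exact hc'.congr fun R => (hrepr R).symm
  -- find a point where K is negative
  have hev : ∀ᶠ R in atTop, Kfun φ ψ μ ω c R < 0 :=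
    htend.eventually (eventually_lt_nhds hLneg)
  obtain ⟨R0, hR01, hR0neg⟩ := ((eventually_ge_atTop (1 : ℝ)).and hev).exists
  have hR00 : (0 : ℝ) ≤ R0 := by linarith
  have hivt := intermediate_value_Icc' hR00 hcont.continuousOn
  have h0mem : (0 : ℝ) ∈ Set.Icc (Kfun φ ψ μ ω c R0) (Kfun φ ψ μ ω c 0) :=
    ⟨hR0neg.le, hK0.le⟩
  obtain ⟨Rs, hRsmem, hRszero⟩ := hivt h0mem
  have hRspos : 0 < Rs := by
    rcases lt_or_eq_of_le hRsmem.1 with h | h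
    · exact h
    · exfalso; rw [← h] at hRszero; linarith [hK0, hRszero]
  refine ⟨hK0, htend, hLneg, Rs, hRspos, hRszero, ?_, ?_, ?_⟩
  · intro R' _ hR'
    exact hanti.injective (hR'.trans hRszero.symm)
  · intro R _ hR
    have := hanti hR
    rw [hRszero] at this
    exact this
  · intro R hR
    have := hanti hR
    rw [hRszero] at this
    exact this
end

section
/- Proportionality of stationary and moving densities along a traveling wave: let 0 < c < 1 and let R, S, M : ℝ → ℝ be differentiable functions satisfying S'(ξ) = (1/c)·(k_sm(R(ξ))·S(ξ) − k_ms(R(ξ))·M(ξ)) and M'(ξ) = (1/(1−c))·(k_sm(R(ξ))·S(ξ) − k_ms(R(ξ))·M(ξ)) for all ξ ∈ ℝ, and suppose S(ξ) → 0 and M(ξ) → 0 as ξ → +∞. Then c·S(ξ) = (1−c)·M(ξ) for every ξ ∈ ℝ. -/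
open Real Filter

/-- Proportionality of stationary and moving densities along a traveling wave:
if S and M satisfy the traveling-wave ODEs and vanish at +∞, then c·S = (1−c)·M everywhere. -/
theorem stationary_moving_proportional (φ ψ μ ω c : ℝ)
    (hφ0 : 0 < φ) (hφ1 : φ ≤ 1) (hμ0 : 0 < μ) (hμψ : μ ≤ ψ) (hω : 0 < ω)
    (hc0 : 0 < c) (hc1 : c < 1)
    (R S M : ℝ → ℝ)
    (hRdiff : Differentiable ℝ R) (hSdiff : Differentiable ℝ S) (hMdiff : Differentiable ℝ M)
    (hS : ∀ ξ : ℝ, deriv S ξ = (1 / c) * (ksm φ (R ξ) * S ξ - kms ψ μ ω (R ξ) * M ξ))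
    (hM : ∀ ξ : ℝ, deriv M ξ = (1 / (1 - c)) * (ksm φ (R ξ) * S ξ - kms ψ μ ω (R ξ) * M ξ))
    (hSlim : Tendsto S atTop (nhds 0)) (hMlim : Tendsto M atTop (nhds 0)) :
    ∀ ξ : ℝ, c * S ξ = (1 - c) * M ξ := by
  have hc0' : c ≠ 0 := ne_of_gt hc0
  have hc1' : (1 - c) ≠ 0 := sub_ne_zero.mpr (ne_of_gt hc1)
  set F : ℝ → ℝ := fun ξ => c * S ξ - (1 - c) * M ξ with hF
  have hFdiff : Differentiable ℝ F := (hSdiff.const_mul c).sub (hMdiff.const_mul (1 - c))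
  have hFderiv : ∀ ξ, deriv F ξ = 0 := by
    intro ξ
    have h1 : deriv F ξ = c * deriv S ξ - (1 - c) * deriv M ξ := by
      rw [hF]
      rw [deriv_fun_sub ((hSdiff ξ).const_mul c) ((hMdiff ξ).const_mul (1 - c)),
        deriv_const_mul c (hSdiff ξ), deriv_const_mul (1 - c) (hMdiff ξ)]
    rw [h1, hS ξ, hM ξ]
    field_simp
    ring
  have hconst : ∀ x y : ℝ, F x = F y := is_const_of_deriv_eq_zero hFdiff hFderiv
  have hFlim : Tendsto F atTop (nhds 0) := by
    have := (hSlim.const_mul c).sub (hMlim.const_mul (1 - c))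
    simpa using this
  intro ξ
  have hFlim' : Tendsto F atTop (nhds (F ξ)) := by
    have : F = fun _ => F ξ := funext fun x => hconst x ξ
    rw [this]; exact tendsto_const_nhds
  have : F ξ = 0 := tendsto_nhds_unique hFlim' hFlim
  have := this
  simp only [hF] at this
  linarith
end

section
/- Existence of traveling waves: assume 0 < φ ≤ 1, 0 < μ ≤ ψ, ω > 0, at least one of φ < 1 or μ < ψ, and let c satisfy φ/(φ+ψ) < c < 1/(1+μ). Let R* > 0 be the unique zero of K. Then for every R⁺ > R* there exist R⁻ with 0 ≤ R⁻ < R* and continuously differentiable functions R, ρ : ℝ → ℝ such that ρ(ξ) > 0 and R(ξ) > 0 for all ξ, the pair satisfies the traveling-wave ODE system R'(ξ) = ((1−c)/c)·ρ(ξ)·R(ξ) and ρ'(ξ) = K(R(ξ))·ρ(ξ) on ℝ, and (R(ξ), ρ(ξ)) → (R⁻, 0) as ξ → −∞ while (R(ξ), ρ(ξ)) → (R⁺, 0) as ξ → +∞. -/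
/-!
Along a wave `dρ/dR = K(R) / (a R)` with `a = (1 - c) / c`, so the wave runs along the orbit
`ρ = P(R) := a⁻¹ ∫_{R⁺}^R K(s)/s ds` through `(R⁺, 0)`. As `K` decreases through its zero `R*`,
`P` increases on `(0, R*]` and decreases on `[R*, ∞)`, so `P(R*) > P(R⁺) = 0`; and `P → -∞` as
`R → 0⁺` because `K` is bounded below by a positive constant near `0`. Hence `P` has a zero
`R⁻ ∈ (0, R*)` and is positive on `(R⁻, R⁺)`. What is left is the scalar equation
`R' = a P(R) R` on `(R⁻, R⁺)`, whose right-hand side is positive inside and Lipschitz with zeros at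
both ends: its time map `∫ dR / (a P(R) R)` is an increasing bijection `(R⁻, R⁺) → ℝ`, and its
inverse is the wave, with `ρ = P ∘ R`.
-/

open Real Filter

open Set Topology MeasureTheory intervalIntegral
open scoped NNReal

lemma contDiffOn_one_of_hasDerivAt {f f' : ℝ → ℝ} {s : Set ℝ} (hs : IsOpen s)
    (hf : ∀ x ∈ s, HasDerivAt f (f' x) x) (hf' : ContinuousOn f' s) : ContDiffOn ℝ 1 f s := by
  rw [show (1 : WithTop ℕ∞) = 0 + 1 from rfl, contDiffOn_succ_iff_deriv_of_isOpen hs]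
  refine ⟨fun x hx => (hf x hx).differentiableAt.differentiableWithinAt, by simp, ?_⟩
  exact contDiffOn_zero.2 (hf'.congr fun x hx => (hf x hx).deriv)

lemma contDiff_one_of_hasDerivAt {f f' : ℝ → ℝ} (hf : ∀ x, HasDerivAt f (f' x) x)
    (hf' : Continuous f') : ContDiff ℝ 1 f :=
  contDiffOn_univ.1 <| contDiffOn_one_of_hasDerivAt isOpen_univ (fun x _ => hf x) hf'.continuousOn

lemma hasDerivAt_integral_of_continuousOn {G : ℝ → ℝ} {U : Set ℝ} [U.OrdConnected]
    (hU : IsOpen U) (hG : ContinuousOn G U) {m r : ℝ} (hm : m ∈ U) (hr : r ∈ U) :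
    HasDerivAt (fun u => ∫ s in m..u, G s) (G r) r :=
  integral_hasDerivAt_right ((hG.mono (OrdConnected.uIcc_subset ‹_› hm hr)).intervalIntegrable)
    (hG.stronglyMeasurableAtFilter hU r hr) (hG.continuousAt (hU.mem_nhds hr))

lemma LipschitzOnWith.le_mul_dist_of_eq_zero {F : ℝ → ℝ} {s : Set ℝ} {L : ℝ≥0}
    (hF : LipschitzOnWith L F s) {x y : ℝ} (hx : x ∈ s) (hy : y ∈ s) (hFy : F y = 0) :
    F x ≤ L * dist x y :=
  (le_abs_self _).trans (by simpa [Real.dist_eq, hFy] using hF.dist_le_mul x hx y hy)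

lemma tendsto_integral_nhdsLT_atTop {G : ℝ → ℝ} {m b κ : ℝ} (hmb : m < b) (hκ : 0 < κ)
    (hG : ContinuousOn G (Ico m b)) (hle : ∀ s ∈ Ico m b, κ / (b - s) ≤ G s) :
    Tendsto (fun r => ∫ s in m..r, G s) (𝓝[<] b) atTop := by
  have hgap : Tendsto (fun r => b - r) (𝓝[<] b) (𝓝[>] 0) := by
    refine tendsto_nhdsWithin_iff.2
      ⟨?_, eventually_nhdsWithin_of_forall fun r hr => sub_pos.2 (mem_Iio.1 hr)⟩
    exact ((continuous_sub_left b).tendsto' b 0 (sub_self b)).mono_left nhdsWithin_le_nhds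
  have hlog : Tendsto (fun r => κ * log ((b - m) / (b - r))) (𝓝[<] b) atTop := by
    refine (tendsto_log_atTop.comp ?_).const_mul_atTop hκ
    simpa [div_eq_mul_inv] using (tendsto_inv_nhdsGT_zero.comp hgap).const_mul_atTop (sub_pos.2 hmb)
  refine tendsto_atTop_mono' _ ?_ hlog
  filter_upwards [Ioo_mem_nhdsLT hmb] with r hr
  have hsub : Icc m r ⊆ Ico m b := Icc_subset_Ico_right hr.2
  have hbr : 0 < b - r := sub_pos.2 hr.2
  calc κ * log ((b - m) / (b - r)) = ∫ s in m..r, κ / (b - s) := by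
        simp_rw [div_eq_mul_inv κ, intervalIntegral.integral_const_mul,
          integral_comp_sub_left (fun s => s⁻¹), integral_inv_of_pos hbr (sub_pos.2 hmb)]
    _ ≤ ∫ s in m..r, G s := by
        refine integral_mono_on hr.1.le ?_ ((hG.mono hsub).intervalIntegrable_of_Icc hr.1.le)
          fun s hs => hle s (hsub hs)
        refine (ContinuousOn.intervalIntegrable_of_Icc hr.1.le ?_)
        exact continuousOn_const.div (continuousOn_const.sub continuousOn_id)
          fun s hs => (sub_pos.2 (hsub hs).2).ne'

lemma tendsto_integral_nhdsGT_atBot {G : ℝ → ℝ} {a m κ : ℝ} (ham : a < m) (hκ : 0 < κ)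
    (hG : ContinuousOn G (Ioc a m)) (hle : ∀ s ∈ Ioc a m, κ / (s - a) ≤ G s) :
    Tendsto (fun r => ∫ s in m..r, G s) (𝓝[>] a) atBot := by
  have hmem : ∀ s ∈ Ico (-m) (-a), -s ∈ Ioc a m := fun s hs =>
    ⟨lt_neg_of_lt_neg hs.2, neg_le.1 hs.1⟩
  have hrefl := tendsto_integral_nhdsLT_atTop (G := fun s => G (-s)) (neg_lt_neg ham) hκ
    (hG.comp continuousOn_neg hmem) fun s hs => by
      simpa [sub_eq_neg_add, add_comm] using hle (-s) (hmem s hs)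
  have hneg : Tendsto Neg.neg (𝓝[>] a) (𝓝[<] (-a)) := by
    simpa using tendsto_neg_nhdsGT_neg (a := -a)
  refine (tendsto_neg_atTop_atBot.comp (hrefl.comp hneg)).congr fun r => ?_
  simp [integral_comp_neg, integral_symm m r]

lemma exists_hasDerivAt_inverse_of_tendsto {ξ G : ℝ → ℝ} {a b : ℝ} (hab : a < b)
    (hξ : ∀ r ∈ Ioo a b, HasDerivAt ξ (G r) r) (hG : ∀ r ∈ Ioo a b, 0 < G r)
    (hbot : Tendsto ξ (𝓝[>] a) atBot) (htop : Tendsto ξ (𝓝[<] b) atTop) :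
    ∃ R : ℝ → ℝ, (∀ t, R t ∈ Ioo a b) ∧ (∀ t, HasDerivAt R (G (R t))⁻¹ t) ∧
      Tendsto R atBot (𝓝 a) ∧ Tendsto R atTop (𝓝 b) := by
  have hcont : ContinuousOn ξ (Ioo a b) := fun r hr => (hξ r hr).continuousAt.continuousWithinAt
  have hmono : StrictMonoOn ξ (Ioo a b) :=
    strictMonoOn_of_deriv_pos (convex_Ioo a b) hcont fun r hr => by
      rw [interior_Ioo] at hr
      exact (hξ r hr).deriv ▸ hG r hr
  have hsurj : SurjOn ξ (Ioo a b) univ :=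
    hcont.surjOn_of_tendsto (nonempty_Ioo.2 hab) ((tendsto_comp_coe_Ioo_atBot hab).2 hbot)
      ((tendsto_comp_coe_Ioo_atTop hab).2 htop)
  let e : Ioo a b ≃o ℝ := StrictMono.orderIsoOfSurjective (fun r => ξ r)
    (fun r s h => hmono r.2 s.2 h) fun t => by
      obtain ⟨r, hr, rfl⟩ := hsurj (mem_univ t)
      exact ⟨⟨r, hr⟩, rfl⟩
  refine ⟨fun t => e.symm t, fun t => (e.symm t).2, fun t => ?_, ?_, ?_⟩
  · have hcont : Continuous fun t => (e.symm t : ℝ) := continuous_subtype_val.comp e.symm.continuous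
    exact HasDerivAt.of_local_left_inverse hcont.continuousAt (hξ _ (e.symm t).2)
      (hG _ (e.symm t).2).ne' (Eventually.of_forall e.apply_symm_apply)
  · exact ((tendsto_Ioo_atBot).1 e.symm.tendsto_atBot).mono_right nhdsWithin_le_nhds
  · exact ((tendsto_Ioo_atTop).1 e.symm.tendsto_atTop).mono_right nhdsWithin_le_nhds

theorem exists_heteroclinic_of_lipschitzOnWith {F : ℝ → ℝ} {a b : ℝ} {L : ℝ≥0} (hab : a < b)
    (hF : LipschitzOnWith L F (Icc a b)) (hFa : F a = 0) (hFb : F b = 0)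
    (hpos : ∀ r ∈ Ioo a b, 0 < F r) :
    ∃ R : ℝ → ℝ, (∀ t, R t ∈ Ioo a b) ∧ (∀ t, HasDerivAt R (F (R t)) t) ∧
      Tendsto R atBot (𝓝 a) ∧ Tendsto R atTop (𝓝 b) := by
  have ha : a ∈ Icc a b := left_mem_Icc.2 hab.le
  have hb : b ∈ Icc a b := right_mem_Icc.2 hab.le
  -- `F` is at most `L ·` the distance to either end, so `1 / F` is not integrable at either end
  have hlo (r : ℝ) (hr : r ∈ Ioo a b) : (L : ℝ)⁻¹ / (r - a) ≤ (F r)⁻¹ := by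
    rw [div_eq_mul_inv, ← mul_inv]
    refine inv_anti₀ (hpos r hr) ?_
    simpa [Real.dist_eq, abs_of_pos (sub_pos.2 hr.1)] using
      hF.le_mul_dist_of_eq_zero (Ioo_subset_Icc_self hr) ha hFa
  have hhi (r : ℝ) (hr : r ∈ Ioo a b) : (L : ℝ)⁻¹ / (b - r) ≤ (F r)⁻¹ := by
    rw [div_eq_mul_inv, ← mul_inv]
    refine inv_anti₀ (hpos r hr) ?_
    simpa [Real.dist_eq, abs_of_neg (sub_neg.2 hr.2)] using
      hF.le_mul_dist_of_eq_zero (Ioo_subset_Icc_self hr) hb hFb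
  obtain ⟨m, hm⟩ := nonempty_Ioo.2 hab
  have hL : (0 : ℝ) < L := pos_of_mul_pos_left
    ((hpos m hm).trans_le (hF.le_mul_dist_of_eq_zero (Ioo_subset_Icc_self hm) ha hFa)) dist_nonneg
  have hG : ContinuousOn (fun r => (F r)⁻¹) (Ioo a b) :=
    (hF.continuousOn.mono Ioo_subset_Icc_self).inv₀ fun r hr => (hpos r hr).ne'
  obtain ⟨R, hR, hR', hbot, htop⟩ := exists_hasDerivAt_inverse_of_tendsto hab
    (fun r hr => hasDerivAt_integral_of_continuousOn isOpen_Ioo hG hm hr)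
    (fun r hr => inv_pos.2 (hpos r hr))
    (tendsto_integral_nhdsGT_atBot hm.1 (inv_pos.2 hL) (hG.mono (Ioc_subset_Ioo_right hm.2))
      fun s hs => hlo s (Ioc_subset_Ioo_right hm.2 hs))
    (tendsto_integral_nhdsLT_atTop hm.2 (inv_pos.2 hL) (hG.mono (Ico_subset_Ioo_left hm.1))
      fun s hs => hhi s (Ico_subset_Ioo_left hm.1 hs))
  exact ⟨R, hR, fun t => by simpa using hR' t, hbot, htop⟩

noncomputable def orbitDensity (K : ℝ → ℝ) (a Rplus r : ℝ) : ℝ :=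
  a⁻¹ * ∫ s in Rplus..r, K s / s

section Orbit

variable {K : ℝ → ℝ} {a Rstar Rplus : ℝ}

@[simp]
lemma orbitDensity_self : orbitDensity K a Rplus Rplus = 0 := by
  simp [orbitDensity]

lemma continuousOn_div_self_Ioi (hK : Continuous K) : ContinuousOn (fun s => K s / s) (Ioi 0) :=
  hK.continuousOn.div continuousOn_id fun _ hs => ne_of_gt hs

lemma hasDerivAt_orbitDensity (hK : Continuous K) {r : ℝ} (hRplus : 0 < Rplus) (hr : 0 < r) :
    HasDerivAt (orbitDensity K a Rplus) (a⁻¹ * (K r / r)) r :=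
  (hasDerivAt_integral_of_continuousOn isOpen_Ioi (continuousOn_div_self_Ioi hK) hRplus
    hr).const_mul a⁻¹

lemma continuousOn_orbitDensity (hK : Continuous K) (hRplus : 0 < Rplus) :
    ContinuousOn (orbitDensity K a Rplus) (Ioi 0) := fun _ hr =>
  (hasDerivAt_orbitDensity hK hRplus hr).continuousAt.continuousWithinAt

lemma strictMonoOn_orbitDensity (hK : Continuous K) (hanti : StrictAnti K) (ha : 0 < a)
    (hKRstar : K Rstar = 0) (hRplus : 0 < Rplus) :
    StrictMonoOn (orbitDensity K a Rplus) (Ioc 0 Rstar) := by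
  refine strictMonoOn_of_deriv_pos (convex_Ioc 0 Rstar)
    ((continuousOn_orbitDensity hK hRplus).mono Ioc_subset_Ioi_self) fun r hr => ?_
  rw [interior_Ioc] at hr
  have hKr : 0 < K r := hKRstar ▸ hanti hr.2
  rw [(hasDerivAt_orbitDensity hK hRplus hr.1).deriv]
  exact mul_pos (inv_pos.2 ha) (div_pos hKr hr.1)

lemma strictAntiOn_orbitDensity (hK : Continuous K) (hanti : StrictAnti K) (ha : 0 < a)
    (hRstar : 0 < Rstar) (hKRstar : K Rstar = 0) (hRplus : 0 < Rplus) :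
    StrictAntiOn (orbitDensity K a Rplus) (Ici Rstar) := by
  have hsub : Ici Rstar ⊆ Ioi 0 := fun r hr => hRstar.trans_le hr
  refine strictAntiOn_of_deriv_neg (convex_Ici Rstar)
    ((continuousOn_orbitDensity hK hRplus).mono hsub) fun r hr => ?_
  rw [interior_Ici] at hr
  have hKr : K r < 0 := hKRstar ▸ hanti hr
  rw [(hasDerivAt_orbitDensity hK hRplus (hsub (mem_Ici.2 hr.le))).deriv]
  exact mul_neg_of_pos_of_neg (inv_pos.2 ha) (div_neg_of_neg_of_pos hKr (hRstar.trans hr))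

lemma tendsto_orbitDensity_nhdsGT_zero (hK : Continuous K) (hanti : StrictAnti K) (ha : 0 < a)
    (hRstar : 0 < Rstar) (hKRstar : K Rstar = 0) (hRplus : 0 < Rplus) :
    Tendsto (orbitDensity K a Rplus) (𝓝[>] 0) atBot := by
  obtain ⟨m, hm⟩ := nonempty_Ioo.2 hRstar
  have hg := continuousOn_div_self_Ioi hK
  have hint {x y : ℝ} (hx : 0 < x) (hy : 0 < y) :
      IntervalIntegrable (fun s => K s / s) volume x y :=
    (hg.mono (ordConnected_Ioi.uIcc_subset hx hy)).intervalIntegrable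
  have hdiv := tendsto_integral_nhdsGT_atBot hm.1 (hKRstar ▸ hanti hm.2)
    (hg.mono Ioc_subset_Ioi_self) fun s hs => by
      simpa using div_le_div_of_nonneg_right (hanti.antitone hs.2) hs.1.le
  refine ((tendsto_atBot_add_const_left _ (∫ s in Rplus..m, K s / s) hdiv).const_mul_atBot
    (inv_pos.2 ha)).congr' ?_
  filter_upwards [self_mem_nhdsWithin] with r hr
  rw [orbitDensity, integral_add_adjacent_intervals (hint hRplus hm.1) (hint hm.1 hr)]

lemma exists_orbitDensity_eq_zero (hK : Continuous K) (hanti : StrictAnti K) (ha : 0 < a)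
    (hRstar : 0 < Rstar) (hKRstar : K Rstar = 0) (hRplus : Rstar < Rplus) :
    ∃ Rminus ∈ Ioo 0 Rstar, orbitDensity K a Rplus Rminus = 0 := by
  have hRplus0 := hRstar.trans hRplus
  have hpos : 0 < orbitDensity K a Rplus Rstar := by
    simpa using strictAntiOn_orbitDensity hK hanti ha hRstar hKRstar hRplus0
      self_mem_Ici (mem_Ici.2 hRplus.le) hRplus
  obtain ⟨R0, hneg, hR0⟩ :=
    (((tendsto_orbitDensity_nhdsGT_zero hK hanti ha hRstar hKRstar hRplus0).eventually
      (eventually_lt_atBot 0)).and (Ioo_mem_nhdsGT hRstar)).exists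
  obtain ⟨Rminus, hRminus, hzero⟩ := intermediate_value_Ioo hR0.2.le
    ((continuousOn_orbitDensity hK hRplus0).mono fun r hr => hR0.1.trans_le hr.1) ⟨hneg, hpos⟩
  exact ⟨Rminus, ⟨hR0.1.trans hRminus.1, hRminus.2⟩, hzero⟩

lemma orbitDensity_pos (hK : Continuous K) (hanti : StrictAnti K) (ha : 0 < a)
    (hKRstar : K Rstar = 0) (hRplus : Rstar < Rplus) {Rminus : ℝ} (hRminus : Rminus ∈ Ioo 0 Rstar)
    (hzero : orbitDensity K a Rplus Rminus = 0) {r : ℝ} (hr : r ∈ Ioo Rminus Rplus) :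
    0 < orbitDensity K a Rplus r := by
  have hRstar := hRminus.1.trans hRminus.2
  rcases le_total r Rstar with h | h
  · exact hzero ▸ strictMonoOn_orbitDensity hK hanti ha hKRstar (hRstar.trans hRplus)
      ⟨hRminus.1, hRminus.2.le⟩ ⟨hRminus.1.trans hr.1, h⟩ hr.1
  · simpa using strictAntiOn_orbitDensity hK hanti ha hRstar hKRstar (hRstar.trans hRplus)
      h (h.trans hr.2.le) hr.2

end Orbit

theorem exists_travelingWave {K : ℝ → ℝ} {a Rstar Rplus : ℝ} (hK : Continuous K)
    (hanti : StrictAnti K) (ha : 0 < a) (hRstar : 0 < Rstar) (hKRstar : K Rstar = 0)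
    (hRplus : Rstar < Rplus) :
    ∃ Rminus ∈ Ioo 0 Rstar, ∃ R ρ : ℝ → ℝ, (∀ t, 0 < ρ t) ∧ (∀ t, 0 < R t) ∧
      (∀ t, HasDerivAt R (a * ρ t * R t) t) ∧ (∀ t, HasDerivAt ρ (K (R t) * ρ t) t) ∧
      Tendsto R atBot (𝓝 Rminus) ∧ Tendsto ρ atBot (𝓝 0) ∧
      Tendsto R atTop (𝓝 Rplus) ∧ Tendsto ρ atTop (𝓝 0) := by
  set P := orbitDensity K a Rplus
  have hRplus0 := hRstar.trans hRplus
  have hP (r : ℝ) (hr : r ∈ Ioi 0) := hasDerivAt_orbitDensity (a := a) hK hRplus0 hr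
  obtain ⟨Rminus, hRminus, hzero⟩ := exists_orbitDensity_eq_zero hK hanti ha hRstar hKRstar hRplus
  have hF : ContDiffOn ℝ 1 (fun r => a * P r * r) (Ioi 0) :=
    (contDiffOn_const.mul (contDiffOn_one_of_hasDerivAt isOpen_Ioi hP
      (continuousOn_const.mul (continuousOn_div_self_Ioi hK)))).mul contDiffOn_id
  obtain ⟨L, hL⟩ := (hF.mono fun r hr => hRminus.1.trans_le hr.1).exists_lipschitzOnWith
    one_ne_zero (convex_Icc _ _) isCompact_Icc
  obtain ⟨R, hR, hR', hbot, htop⟩ := exists_heteroclinic_of_lipschitzOnWith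
    (hRminus.2.trans hRplus) hL (by simp [P, hzero]) (by simp [P]) fun r hr =>
      mul_pos (mul_pos ha (orbitDensity_pos hK hanti ha hKRstar hRplus hRminus hzero hr))
        (hRminus.1.trans hr.1)
  have hR0 (t : ℝ) : 0 < R t := hRminus.1.trans (hR t).1
  refine ⟨Rminus, hRminus, R, fun t => P (R t),
    fun t => orbitDensity_pos hK hanti ha hKRstar hRplus hRminus hzero (hR t), hR0, hR',
    fun t => ?_, hbot, ?_, htop, ?_⟩
  · refine ((hP _ (hR0 t)).comp t (hR' t)).congr_deriv ?_
    field_simp [ha.ne', (hR0 t).ne']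
  · exact hzero ▸ (hP _ hRminus.1).continuousAt.tendsto.comp hbot
  · exact orbitDensity_self (K := K) ▸ (hP _ hRplus0).continuousAt.tendsto.comp htop

lemma hasDerivAt_Kfun (φ ψ μ ω c x : ℝ) :
    HasDerivAt (Kfun φ ψ μ ω c)
      ((φ - 1) * exp (-x) / c - ω * (ψ - μ) * exp (-ω * x) / (1 - c)) x := by
  have hsm : HasDerivAt (ksm φ) ((φ - 1) * exp (-x)) x := by
    show HasDerivAt (fun x => φ - (φ - 1) * exp (-x)) _ x
    simpa using ((((hasDerivAt_id x).neg).exp).const_mul (φ - 1)).const_sub φ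
  have hms : HasDerivAt (kms ψ μ ω) (ω * (ψ - μ) * exp (-ω * x)) x := by
    have := ((((hasDerivAt_id' x).const_mul (-ω)).exp).const_mul (ψ - μ)).const_sub ψ
    exact this.congr_deriv (by ring)
  exact (hsm.div_const c).sub (hms.div_const (1 - c))

lemma continuous_Kfun (φ ψ μ ω c : ℝ) : Continuous (Kfun φ ψ μ ω c) :=
  continuous_iff_continuousAt.2 fun x => (hasDerivAt_Kfun φ ψ μ ω c x).continuousAt

lemma Kfun_strictAnti {φ ψ μ ω c : ℝ} (hφ1 : φ ≤ 1) (hμψ : μ ≤ ψ) (hω : 0 < ω)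
    (hne : φ < 1 ∨ μ < ψ) (hc0 : 0 < c) (hc1 : c < 1) : StrictAnti (Kfun φ ψ μ ω c) := by
  refine strictAnti_of_deriv_neg fun x => ?_
  rw [(hasDerivAt_Kfun φ ψ μ ω c x).deriv]
  have h1c : 0 < 1 - c := sub_pos.2 hc1
  have hsm : (φ - 1) * exp (-x) / c ≤ 0 :=
    div_nonpos_of_nonpos_of_nonneg (mul_nonpos_of_nonpos_of_nonneg (by linarith) (exp_pos _).le)
      hc0.le
  have hms : 0 ≤ ω * (ψ - μ) * exp (-ω * x) / (1 - c) := by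
    have := sub_nonneg.2 hμψ
    positivity
  rcases hne with hφ | hμ
  · have : (φ - 1) * exp (-x) / c < 0 :=
      div_neg_of_neg_of_pos (mul_neg_of_neg_of_pos (by linarith) (exp_pos _)) hc0
    linarith
  · have := sub_pos.2 hμ
    have : 0 < ω * (ψ - μ) * exp (-ω * x) / (1 - c) := by positivity
    linarith

theorem traveling_wave_exists_general (φ ψ μ ω c Rstar : ℝ)
    (hφ0 : 0 < φ) (hφ1 : φ ≤ 1) (hμ0 : 0 < μ) (hμψ : μ ≤ ψ) (hω : 0 < ω)
    (hne : φ < 1 ∨ μ < ψ)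
    (hclow : φ / (φ + ψ) < c) (hchigh : c < 1 / (1 + μ))
    (hRstar_pos : 0 < Rstar) (hRstar_zero : Kfun φ ψ μ ω c Rstar = 0) :
    ∀ Rplus : ℝ, Rstar < Rplus →
      ∃ Rminus : ℝ, 0 ≤ Rminus ∧ Rminus < Rstar ∧
        ∃ R ρ : ℝ → ℝ, ContDiff ℝ 1 R ∧ ContDiff ℝ 1 ρ ∧
          (∀ ξ : ℝ, 0 < ρ ξ) ∧ (∀ ξ : ℝ, 0 < R ξ) ∧
          (∀ ξ : ℝ, deriv R ξ = ((1 - c) / c) * ρ ξ * R ξ) ∧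
          (∀ ξ : ℝ, deriv ρ ξ = Kfun φ ψ μ ω c (R ξ) * ρ ξ) ∧
          Tendsto R atBot (nhds Rminus) ∧ Tendsto ρ atBot (nhds 0) ∧
          Tendsto R atTop (nhds Rplus) ∧ Tendsto ρ atTop (nhds 0) := by
  intro Rplus hRplus
  have hc0 : 0 < c := (div_pos hφ0 (by linarith)).trans hclow
  have hc1 : c < 1 := hchigh.trans ((div_lt_one (by linarith)).2 (by linarith))
  have hK := continuous_Kfun φ ψ μ ω c
  obtain ⟨Rminus, hRminus, R, ρ, hρ, hR, hR', hρ', hRbot, hρbot, hRtop, hρtop⟩ :=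
    exists_travelingWave hK (Kfun_strictAnti hφ1 hμψ hω hne hc0 hc1)
      (div_pos (sub_pos.2 hc1) hc0) hRstar_pos hRstar_zero hRplus
  have hRc : Continuous R := continuous_iff_continuousAt.2 fun t => (hR' t).continuousAt
  have hρc : Continuous ρ := continuous_iff_continuousAt.2 fun t => (hρ' t).continuousAt
  exact ⟨Rminus, hRminus.1.le, hRminus.2, R, ρ,
    contDiff_one_of_hasDerivAt hR' (by fun_prop), contDiff_one_of_hasDerivAt hρ' (by fun_prop),
    hρ, hR, fun t => (hR' t).deriv, fun t => (hρ' t).deriv, hRbot, hρbot, hRtop, hρtop⟩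

/-- Existence of traveling waves: for every R⁺ > R* (R* the unique zero of K) there is a
heteroclinic solution of the traveling-wave ODE system connecting (R⁻, 0) to (R⁺, 0). -/
theorem traveling_wave_exists (φ ψ μ ω c Rstar : ℝ)
    (hφ0 : 0 < φ) (hφ1 : φ ≤ 1) (hμ0 : 0 < μ) (hμψ : μ ≤ ψ) (hω : 0 < ω)
    (hne : φ < 1 ∨ μ < ψ)
    (hclow : φ / (φ + ψ) < c) (hchigh : c < 1 / (1 + μ))
    (hRstar_pos : 0 < Rstar) (hRstar_zero : Kfun φ ψ μ ω c Rstar = 0)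
    (hRstar_unique : ∀ R' : ℝ, 0 < R' → Kfun φ ψ μ ω c R' = 0 → R' = Rstar) :
    ∀ Rplus : ℝ, Rstar < Rplus →
      ∃ Rminus : ℝ, 0 ≤ Rminus ∧ Rminus < Rstar ∧
        ∃ R ρ : ℝ → ℝ, ContDiff ℝ 1 R ∧ ContDiff ℝ 1 ρ ∧
          (∀ ξ : ℝ, 0 < ρ ξ) ∧ (∀ ξ : ℝ, 0 < R ξ) ∧
          (∀ ξ : ℝ, deriv R ξ = ((1 - c) / c) * ρ ξ * R ξ) ∧
          (∀ ξ : ℝ, deriv ρ ξ = Kfun φ ψ μ ω c (R ξ) * ρ ξ) ∧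
          Tendsto R atBot (nhds Rminus) ∧ Tendsto ρ atBot (nhds 0) ∧
          Tendsto R atTop (nhds Rplus) ∧ Tendsto ρ atTop (nhds 0) :=
  traveling_wave_exists_general φ ψ μ ω c Rstar hφ0 hφ1 hμ0 hμψ hω hne hclow hchigh hRstar_pos
    hRstar_zero
end

section
/- Integral speed relation for traveling waves: assume 0 < φ ≤ 1, 0 < μ ≤ ψ, ω > 0, and 0 < c < 1. Let R, ρ : ℝ → ℝ be continuously differentiable with ρ(ξ) > 0 and R(ξ) > 0 for all ξ, satisfying the traveling-wave ODE system, with limits (R(ξ), ρ(ξ)) → (R⁻, 0) as ξ → −∞ and (R(ξ), ρ(ξ)) → (R⁺, 0) as ξ → +∞, where 0 < R⁻ < R⁺. Then (1−c)·I₁(R⁻, R⁺) = c·I₂(R⁻, R⁺), i.e. I₁(R⁻,R⁺)/I₂(R⁻,R⁺) = c/(1−c). -/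
open Real Filter intervalIntegral

/-- I₁(a,b) = ∫_a^b k_sm(r)/r dr. -/
noncomputable def I1 (φ a b : ℝ) : ℝ := ∫ r in a..b, ksm φ r / r

/-- I₂(a,b) = ∫_a^b k_ms(r)/r dr. -/
noncomputable def I2 (ψ μ ω a b : ℝ) : ℝ := ∫ r in a..b, kms ψ μ ω r / r

/-- Integral speed relation for traveling waves: (1−c)·I₁ = c·I₂. -/
theorem integral_speed_relation (φ ψ μ ω c Rminus Rplus : ℝ)
    (hφ0 : 0 < φ) (hφ1 : φ ≤ 1) (hμ0 : 0 < μ) (hμψ : μ ≤ ψ) (hω : 0 < ω)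
    (hc0 : 0 < c) (hc1 : c < 1)
    (hRm : 0 < Rminus) (hRmp : Rminus < Rplus)
    (R ρ : ℝ → ℝ) (hR : ContDiff ℝ 1 R) (hρ : ContDiff ℝ 1 ρ)
    (hρpos : ∀ ξ : ℝ, 0 < ρ ξ) (hRpos : ∀ ξ : ℝ, 0 < R ξ)
    (hRode : ∀ ξ : ℝ, deriv R ξ = ((1 - c) / c) * ρ ξ * R ξ)
    (hρode : ∀ ξ : ℝ, deriv ρ ξ = Kfun φ ψ μ ω c (R ξ) * ρ ξ)
    (hRbot : Tendsto R atBot (nhds Rminus)) (hρbot : Tendsto ρ atBot (nhds 0))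
    (hRtop : Tendsto R atTop (nhds Rplus)) (hρtop : Tendsto ρ atTop (nhds 0)) :
    (1 - c) * I1 φ Rminus Rplus = c * I2 ψ μ ω Rminus Rplus := by
  have hc' : (0:ℝ) < 1 - c := by linarith
  have hcne : c ≠ 0 := ne_of_gt hc0
  have hc'ne : (1:ℝ) - c ≠ 0 := ne_of_gt hc'
  set S : Set ℝ := {r : ℝ | r ≠ 0} with hS
  have hopen : IsOpen S := isOpen_ne
  have hcontK : Continuous (fun r => Kfun φ ψ μ ω c r) := by
    unfold Kfun ksm kms; continuity
  have hcont : ContinuousOn (fun r => Kfun φ ψ μ ω c r / r) S := by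
    exact ContinuousOn.div hcontK.continuousOn continuousOn_id (fun x hx => hx)
  have hcont1 : ContinuousOn (fun r => ksm φ r / r) S := by
    apply ContinuousOn.div _ continuousOn_id (fun x hx => hx)
    exact (by unfold ksm; continuity : Continuous (ksm φ)).continuousOn
  have hcont2 : ContinuousOn (fun r => kms ψ μ ω r / r) S := by
    apply ContinuousOn.div _ continuousOn_id (fun x hx => hx)
    exact (by unfold kms; continuity : Continuous (kms ψ μ ω)).continuousOn
  have hsub : ∀ x : ℝ, 0 < x → Set.uIcc Rminus x ⊆ S := by
    intro x hx r hr
    have h1 : min Rminus x ≤ r := hr.1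
    have h2 : 0 < min Rminus x := lt_min hRm hx
    exact ne_of_gt (lt_of_lt_of_le h2 h1)
  set f : ℝ → ℝ := fun x => ∫ r in Rminus..x, Kfun φ ψ μ ω c r / r with hf
  have hderiv : ∀ x : ℝ, 0 < x → HasDerivAt f (Kfun φ ψ μ ω c x / x) x := by
    intro x hx
    apply intervalIntegral.integral_hasDerivAt_right
    · exact (hcont.mono (hsub x hx)).intervalIntegrable
    · exact hcont.stronglyMeasurableAtFilter hopen x (ne_of_gt hx)
    · exact hcont.continuousAt (hopen.mem_nhds (ne_of_gt hx))
  set G : ℝ → ℝ := fun ξ => ρ ξ - (c / (1 - c)) * f (R ξ) with hG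
  have hGderiv : ∀ ξ : ℝ, HasDerivAt G 0 ξ := by
    intro ξ
    have hRd : HasDerivAt R (deriv R ξ) ξ :=
      ((hR.differentiable one_ne_zero) ξ).hasDerivAt
    have hρd : HasDerivAt ρ (deriv ρ ξ) ξ :=
      ((hρ.differentiable one_ne_zero) ξ).hasDerivAt
    have hfd : HasDerivAt (fun ξ => f (R ξ))
        ((Kfun φ ψ μ ω c (R ξ) / R ξ) * deriv R ξ) ξ :=
      (hderiv (R ξ) (hRpos ξ)).comp ξ hRd
    have := hρd.sub ((hfd.const_mul (c / (1 - c))))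
    refine this.congr_deriv ?_
    rw [hρode ξ, hRode ξ]
    have hRne : R ξ ≠ 0 := ne_of_gt (hRpos ξ)
    field_simp
    ring
  have hGdiff : Differentiable ℝ G := fun ξ => (hGderiv ξ).differentiableAt
  have hGconst : ∀ ξ : ℝ, G ξ = G 0 :=
    fun ξ => is_const_of_deriv_eq_zero hGdiff (fun x => (hGderiv x).deriv) ξ 0
  -- limits
  have hfp : ContinuousAt f Rplus := (hderiv Rplus (lt_trans hRm hRmp)).continuousAt
  have hfm : ContinuousAt f Rminus := (hderiv Rminus hRm).continuousAt
  have hGtop : Tendsto G atTop (nhds (0 - (c / (1 - c)) * f Rplus)) :=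
    hρtop.sub ((hfp.tendsto.comp hRtop).const_mul _)
  have hGbot : Tendsto G atBot (nhds (0 - (c / (1 - c)) * f Rminus)) :=
    hρbot.sub ((hfm.tendsto.comp hRbot).const_mul _)
  have hGconst_top : Tendsto G atTop (nhds (G 0)) := by
    have : G = fun _ => G 0 := funext hGconst
    rw [this]; exact tendsto_const_nhds
  have hGconst_bot : Tendsto G atBot (nhds (G 0)) := by
    have : G = fun _ => G 0 := funext hGconst
    rw [this]; exact tendsto_const_nhds
  have e1 : G 0 = 0 - (c / (1 - c)) * f Rplus := tendsto_nhds_unique hGconst_top hGtop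
  have e2 : G 0 = 0 - (c / (1 - c)) * f Rminus := tendsto_nhds_unique hGconst_bot hGbot
  have hfmz : f Rminus = 0 := intervalIntegral.integral_same
  have hfpz : f Rplus = 0 := by
    have hcc : c / (1 - c) ≠ 0 := div_ne_zero hcne hc'ne
    have h3 : (c / (1 - c)) * f Rplus = 0 := by
      have := e1.symm.trans e2
      rw [hfmz] at this
      linarith
    rcases mul_eq_zero.mp h3 with h | h
    · exact absurd h hcc
    · exact h
  -- split the integral
  have hsubp : Set.uIcc Rminus Rplus ⊆ S := hsub Rplus (lt_trans hRm hRmp)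
  have hint1 : IntervalIntegrable (fun r => ksm φ r / r) MeasureTheory.volume Rminus Rplus :=
    (hcont1.mono hsubp).intervalIntegrable
  have hint2 : IntervalIntegrable (fun r => kms ψ μ ω r / r) MeasureTheory.volume Rminus Rplus :=
    (hcont2.mono hsubp).intervalIntegrable
  have hsplit : f Rplus = (1 / c) * I1 φ Rminus Rplus - (1 / (1 - c)) * I2 ψ μ ω Rminus Rplus := by
    have heq : (fun r => Kfun φ ψ μ ω c r / r) =
        fun r => (1 / c) * (ksm φ r / r) - (1 / (1 - c)) * (kms ψ μ ω r / r) := by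
      funext r; unfold Kfun; ring
    rw [hf]
    simp only [heq]
    rw [intervalIntegral.integral_sub (hint1.const_mul _) (hint2.const_mul _),
      intervalIntegral.integral_const_mul, intervalIntegral.integral_const_mul]
    rfl
  rw [hfpz] at hsplit
  have : (1 / c) * I1 φ Rminus Rplus = (1 / (1 - c)) * I2 ψ μ ω Rminus Rplus := by linarith
  field_simp at this
  linarith
end

section
/- Mass–speed–resource relation for traveling waves: assume 0 < φ ≤ 1, 0 < μ ≤ ψ, ω > 0, and 0 < c < 1. Let R, ρ : ℝ → ℝ be continuously differentiable with ρ(ξ) > 0 and R(ξ) > 0 for all ξ, satisfying the traveling-wave ODE system, with limits (R(ξ), ρ(ξ)) → (R⁻, 0) as ξ → −∞ and (R(ξ), ρ(ξ)) → (R⁺, 0) as ξ → +∞ where 0 < R⁻ < R⁺, and suppose ρ is integrable on ℝ with N = ∫_ℝ ρ(ξ) dξ. Then N = (c/(1−c))·ln(R⁺/R⁻). -/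
open Real Filter MeasureTheory

/-- Mass–speed–resource relation: the total mass N = ∫ ρ satisfies
N = (c/(1−c))·ln(R⁺/R⁻). -/
theorem mass_speed_resource_relation (φ ψ μ ω c Rminus Rplus N : ℝ)
    (hφ0 : 0 < φ) (hφ1 : φ ≤ 1) (hμ0 : 0 < μ) (hμψ : μ ≤ ψ) (hω : 0 < ω)
    (hc0 : 0 < c) (hc1 : c < 1)
    (hRm : 0 < Rminus) (hRmp : Rminus < Rplus)
    (R ρ : ℝ → ℝ) (hR : ContDiff ℝ 1 R) (hρ : ContDiff ℝ 1 ρ)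
    (hρpos : ∀ ξ : ℝ, 0 < ρ ξ) (hRpos : ∀ ξ : ℝ, 0 < R ξ)
    (hRode : ∀ ξ : ℝ, deriv R ξ = ((1 - c) / c) * ρ ξ * R ξ)
    (hρode : ∀ ξ : ℝ, deriv ρ ξ = Kfun φ ψ μ ω c (R ξ) * ρ ξ)
    (hRbot : Tendsto R atBot (nhds Rminus)) (hρbot : Tendsto ρ atBot (nhds 0))
    (hRtop : Tendsto R atTop (nhds Rplus)) (hρtop : Tendsto ρ atTop (nhds 0))
    (hint : Integrable ρ) (hN : N = ∫ ξ : ℝ, ρ ξ) :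
    N = (c / (1 - c)) * Real.log (Rplus / Rminus) := by
  have hc1' : (0:ℝ) < 1 - c := by linarith
  set g : ℝ → ℝ := fun ξ => (c / (1 - c)) * Real.log (R ξ) with hg
  have hderiv : ∀ ξ, HasDerivAt g (ρ ξ) ξ := by
    intro ξ
    have hRd : HasDerivAt R (deriv R ξ) ξ :=
      ((hR.differentiable one_ne_zero) ξ).hasDerivAt
    have hlog : HasDerivAt (fun x => Real.log (R x)) (deriv R ξ / R ξ) ξ :=
      hRd.log (ne_of_gt (hRpos ξ))
    have := hlog.const_mul (c / (1 - c))
    refine this.congr_deriv ?_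
    rw [hRode ξ, mul_div_cancel_right₀ _ (ne_of_gt (hRpos ξ))]
    field_simp
  have hbot : Tendsto g atBot (nhds ((c / (1 - c)) * Real.log Rminus)) :=
    (((Real.continuousAt_log (ne_of_gt hRm)).tendsto.comp hRbot).const_mul _)
  have htop : Tendsto g atTop (nhds ((c / (1 - c)) * Real.log Rplus)) :=
    (((Real.continuousAt_log (ne_of_gt (hRm.trans hRmp))).tendsto.comp hRtop).const_mul _)
  have key := MeasureTheory.integral_of_hasDerivAt_of_tendsto hderiv hint hbot htop
  rw [hN, key, Real.log_div (ne_of_gt (hRm.trans hRmp)) (ne_of_gt hRm)]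
  ring
end

section
/- Negativity of the key cross integral: assume 0 < φ ≤ 1, 0 < μ ≤ ψ, ω > 0, and at least one of φ < 1 or μ < ψ. Then for all 0 < R⁻ < R⁺, one has I₁(R⁻,R⁺)·k_ms(R⁻) − I₂(R⁻,R⁺)·k_sm(R⁻) < 0; equivalently, ∫_{R⁻}^{R⁺} (1/r)·( k_sm(r)/k_sm(R⁻) − k_ms(r)/k_ms(R⁻) ) dr < 0. -/
/-!
With `R⁻ < r`, the rate `k_sm` is antitone and `k_ms` monotone, both positive on `[0, ∞)`, and at
least one of them is strict, so `k_sm(r)/k_sm(R⁻) ≤ 1 ≤ k_ms(r)/k_ms(R⁻)` with strict inequality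
for `r > R⁻`. Dividing by `r > 0` and integrating gives `I₁/k_sm(R⁻) < I₂/k_ms(R⁻)`, which is
both forms of the claim.
-/

open Real Filter intervalIntegral

open Set in
theorem continuousOn_div_id_Icc_of_pos {f : ℝ → ℝ} (hf : Continuous f) {a b : ℝ} (ha : 0 < a) :
    ContinuousOn (fun r => f r / r) (Icc a b) :=
  hf.continuousOn.div continuousOn_id fun _ hx => (ha.trans_le hx.1).ne'

section ksm

variable {φ : ℝ}

theorem continuous_ksm (φ : ℝ) : Continuous (ksm φ) := by
  unfold ksm; fun_prop

theorem ksm_pos (hφ0 : 0 < φ) (hφ1 : φ ≤ 1) (R : ℝ) : 0 < ksm φ R := by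
  have : 0 ≤ (1 - φ) * exp (-R) := mul_nonneg (sub_nonneg.2 hφ1) (exp_pos _).le
  simp only [ksm]; linarith

theorem ksm_antitone (hφ1 : φ ≤ 1) : Antitone (ksm φ) := fun x y hxy => by
  have := exp_le_exp.2 (neg_le_neg hxy)
  simp only [ksm]; nlinarith

theorem ksm_strictAnti (hφ1 : φ < 1) : StrictAnti (ksm φ) := fun x y hxy => by
  have := exp_lt_exp.2 (neg_lt_neg hxy)
  simp only [ksm]; nlinarith

end ksm

section kms

variable {ψ μ ω : ℝ}

theorem continuous_kms (ψ μ ω : ℝ) : Continuous (kms ψ μ ω) := by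
  unfold kms; fun_prop

theorem kms_zero : kms ψ μ ω 0 = μ := by
  simp [kms]

theorem kms_monotone (hμψ : μ ≤ ψ) (hω : 0 ≤ ω) : Monotone (kms ψ μ ω) := fun x y hxy => by
  have := exp_le_exp.2 (neg_le_neg (mul_le_mul_of_nonneg_left hxy hω))
  simp only [kms, neg_mul]; nlinarith

theorem kms_strictMono (hμψ : μ < ψ) (hω : 0 < ω) : StrictMono (kms ψ μ ω) := fun x y hxy => by
  have := exp_lt_exp.2 (neg_lt_neg (mul_lt_mul_of_pos_left hxy hω))
  simp only [kms, neg_mul]; nlinarith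

theorem kms_pos (hμ0 : 0 < μ) (hμψ : μ ≤ ψ) (hω : 0 ≤ ω) {R : ℝ} (hR : 0 ≤ R) :
    0 < kms ψ μ ω R :=
  hμ0.trans_le (kms_zero.symm.trans_le (kms_monotone hμψ hω hR))

end kms

theorem ksm_div_lt_kms_div {φ ψ μ ω : ℝ} (hφ0 : 0 < φ) (hφ1 : φ ≤ 1) (hμ0 : 0 < μ)
    (hμψ : μ ≤ ψ) (hω : 0 < ω) (hne : φ < 1 ∨ μ < ψ) {a x : ℝ} (ha : 0 ≤ a) (hax : a < x) :
    ksm φ x / ksm φ a < kms ψ μ ω x / kms ψ μ ω a := by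
  have hK := ksm_pos hφ0 hφ1 a
  have hM := kms_pos hμ0 hμψ hω.le ha
  rcases hne with hφ | hμ
  · calc ksm φ x / ksm φ a < 1 := (div_lt_one hK).2 (ksm_strictAnti hφ hax)
      _ ≤ kms ψ μ ω x / kms ψ μ ω a := (one_le_div hM).2 (kms_monotone hμψ hω.le hax.le)
  · calc ksm φ x / ksm φ a ≤ 1 := (div_le_one hK).2 (ksm_antitone hφ1 hax.le)
      _ < kms ψ μ ω x / kms ψ μ ω a := (one_lt_div hM).2 (kms_strictMono hμ hω hax)

/-- Negativity of the key cross integral: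
I₁·k_ms(R⁻) − I₂·k_sm(R⁻) < 0, equivalently
∫ (1/r)(k_sm(r)/k_sm(R⁻) − k_ms(r)/k_ms(R⁻)) dr < 0. -/
theorem cross_integral_neg (φ ψ μ ω : ℝ)
    (hφ0 : 0 < φ) (hφ1 : φ ≤ 1) (hμ0 : 0 < μ) (hμψ : μ ≤ ψ) (hω : 0 < ω)
    (hne : φ < 1 ∨ μ < ψ) :
    ∀ Rminus Rplus : ℝ, 0 < Rminus → Rminus < Rplus →
      I1 φ Rminus Rplus * kms ψ μ ω Rminus - I2 ψ μ ω Rminus Rplus * ksm φ Rminus < 0 ∧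
      (∫ r in Rminus..Rplus,
        (1 / r) * (ksm φ r / ksm φ Rminus - kms ψ μ ω r / kms ψ μ ω Rminus)) < 0 := by
  intro a b ha hab
  have hK := ksm_pos hφ0 hφ1 a
  have hM := kms_pos hμ0 hμψ hω.le ha.le
  have hc₁ := continuousOn_div_id_Icc_of_pos (continuous_ksm φ) ha (b := b)
  have hc₂ := continuousOn_div_id_Icc_of_pos (continuous_kms ψ μ ω) ha (b := b)
  have hratio : ∀ x, a < x → ksm φ x / x / ksm φ a < kms ψ μ ω x / x / kms ψ μ ω a :=
    fun x hx => by
      rw [div_right_comm, div_right_comm (kms ψ μ ω x)]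
      exact div_lt_div_of_pos_right (ksm_div_lt_kms_div hφ0 hφ1 hμ0 hμψ hω hne ha.le hx)
        (ha.trans hx)
  have hlt : I1 φ a b / ksm φ a < I2 ψ μ ω a b / kms ψ μ ω a := by
    simp only [I1, I2, ← integral_div]
    exact integral_lt_integral_of_continuousOn_of_le_of_exists_lt hab (hc₁.div_const _)
      (hc₂.div_const _) (fun x hx => (hratio x hx.1).le)
      ⟨b, Set.right_mem_Icc.2 hab.le, hratio b hab⟩
  refine ⟨by rwa [div_lt_div_iff₀ hK hM, ← sub_neg] at hlt, ?_⟩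
  rw [← Set.uIcc_of_le hab.le] at hc₁ hc₂
  calc (∫ r in a..b, (1 / r) * (ksm φ r / ksm φ a - kms ψ μ ω r / kms ψ μ ω a))
      = I1 φ a b / ksm φ a - I2 ψ μ ω a b / kms ψ μ ω a := by
        rw [I1, I2, ← integral_div, ← integral_div, ← integral_sub
          (hc₁.intervalIntegrable.div_const _) (hc₂.intervalIntegrable.div_const _)]
        congr 1; ext r; ring
    _ < 0 := sub_neg.2 hlt
end

section
/- Convergence of the first moments in the co-moving frame: let α, β, v > 0, S₀, M₀ ≥ 0 with S₀ + M₀ = 1, and set c = v·α/(α+β). Suppose 𝒮₀, 𝓜₀ solve the zeroth-moment system with 𝒮₀(0) = S₀, 𝓜₀(0) = M₀, and 𝒮₁, 𝓜₁ : [0,∞) → ℝ are differentiable with 𝒮₁'(t) = −α·𝒮₁(t) + β·𝓜₁(t) − c·𝒮₀(t), 𝓜₁'(t) = α·𝒮₁(t) − β·𝓜₁(t) − (c−v)·𝓜₀(t), and 𝒮₁(0) = 𝓜₁(0) = 0. Then as t → ∞, 𝒮₁(t) → (β v/(α+β)³)·(β·M₀ − α·(1+S₀)) and 𝓜₁(t)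 → (α v/(α+β)³)·(−α·S₀ + β·(1+M₀)). -/
/-!
The zeroth moments conserve mass, so `M0' = α - (α + β) M0` and `M0` relaxes to `α / (α + β)` at
rate `k = α + β`. For the first moments, the drift `c = v α / k` is exactly the one for which the
total `S1 + M1` has derivative a multiple of `exp (-k t)`, so it converges; the combination
`α S1 - β M1` satisfies `f' = -k f + a + b exp (-k t)`, which an integrating factor solves
explicitly. `S1` and `M1` are linear combinations of these two limits.
-/

open Real Filter Topology

theorem eq_apply_zero_of_hasDerivAt_zero {f : ℝ → ℝ} (hf : ∀ t, 0 ≤ t → HasDerivAt f 0 t)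
    {t : ℝ} (ht : 0 ≤ t) : f t = f 0 :=
  constant_of_has_deriv_right_zero (fun x hx ↦ (hf x hx.1).continuousAt.continuousWithinAt)
    (fun x hx ↦ (hf x hx.1).hasDerivWithinAt) t ⟨ht, le_rfl⟩

theorem tendsto_mul_exp_neg_mul_atTop_nhds_zero {k : ℝ} (hk : 0 < k) :
    Tendsto (fun t ↦ t * exp (-k * t)) atTop (𝓝 0) := by
  simpa using tendsto_rpow_mul_exp_neg_mul_atTop_nhds_zero 1 k hk

theorem tendsto_exp_neg_mul_atTop_nhds_zero {k : ℝ} (hk : 0 < k) :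
    Tendsto (fun t ↦ exp (-k * t)) atTop (𝓝 0) := by
  simpa using tendsto_rpow_mul_exp_neg_mul_atTop_nhds_zero 0 k hk

section Relaxation

variable {f : ℝ → ℝ} {k a b : ℝ}

theorem tendsto_of_hasDerivAt_exp_decay (hk : 0 < k)
    (hf : ∀ t, 0 ≤ t → HasDerivAt f (b * exp (-k * t)) t) :
    Tendsto f atTop (𝓝 (f 0 + b / k)) := by
  have hconst : ∀ t, 0 ≤ t → HasDerivAt (fun s ↦ f s + b / k * exp (-k * s)) 0 t := by
    intro t ht
    refine ((hf t ht).add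
      (((hasDerivAt_id' t).const_mul (-k)).exp.const_mul (b / k))).congr_deriv ?_
    field_simp
    ring
  have hf_eq : ∀ᶠ t in atTop, f 0 + b / k - b / k * exp (-k * t) = f t := by
    filter_upwards [eventually_ge_atTop 0] with t ht
    have := eq_apply_zero_of_hasDerivAt_zero hconst ht
    simp only [mul_zero, exp_zero, mul_one] at this
    linarith
  simpa using (tendsto_const_nhds.sub
    ((tendsto_exp_neg_mul_atTop_nhds_zero hk).const_mul (b / k))).congr' hf_eq

theorem eq_of_hasDerivAt_relaxation (hk : k ≠ 0)
    (hf : ∀ t, 0 ≤ t → HasDerivAt f (-k * f t + (a + b * exp (-k * t))) t) {t : ℝ} (ht : 0 ≤ t) :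
    f t = a / k + (f 0 - a / k + b * t) * exp (-k * t) := by
  have hconst : ∀ t, 0 ≤ t → HasDerivAt (fun s ↦ (f s - a / k) * exp (k * s) - b * s) 0 t := by
    intro t ht
    refine ((((hf t ht).sub_const (a / k)).mul ((hasDerivAt_id' t).const_mul k).exp).sub
      ((hasDerivAt_id' t).const_mul b)).congr_deriv ?_
    have hexp : exp (-k * t) * exp (k * t) = 1 := by rw [← exp_add]; ring_nf; exact exp_zero
    field_simp
    rw [neg_mul] at hexp
    linear_combination b * hexp
  have := eq_apply_zero_of_hasDerivAt_zero hconst ht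
  simp only [mul_zero, exp_zero, mul_one, sub_zero] at this
  have hexp : exp (k * t) * exp (-k * t) = 1 := by rw [← exp_add]; ring_nf; exact exp_zero
  linear_combination (exp (-k * t)) * this - (f t - a / k) * hexp

theorem tendsto_of_hasDerivAt_relaxation (hk : 0 < k)
    (hf : ∀ t, 0 ≤ t → HasDerivAt f (-k * f t + (a + b * exp (-k * t))) t) :
    Tendsto f atTop (𝓝 (a / k)) := by
  have hlim : Tendsto (fun t ↦ a / k + ((f 0 - a / k) * exp (-k * t) + b * (t * exp (-k * t))))
      atTop (𝓝 (a / k + ((f 0 - a / k) * 0 + b * 0))) :=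
    tendsto_const_nhds.add (((tendsto_exp_neg_mul_atTop_nhds_zero hk).const_mul _).add
      ((tendsto_mul_exp_neg_mul_atTop_nhds_zero hk).const_mul b))
  simp only [mul_zero, add_zero] at hlim
  refine hlim.congr' ?_
  filter_upwards [eventually_ge_atTop 0] with t ht
  rw [eq_of_hasDerivAt_relaxation hk.ne' hf ht]
  ring

end Relaxation

theorem first_moments_converge_general (α β v S₀ M₀ : ℝ)
    (hα : 0 < α) (hβ : 0 < β)
    (hsum : S₀ + M₀ = 1)
    (S0 M0 S1 M1 : ℝ → ℝ)
    (hS0' : ∀ t : ℝ, 0 ≤ t → HasDerivAt S0 (-α * S0 t + β * M0 t) t)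
    (hM0' : ∀ t : ℝ, 0 ≤ t → HasDerivAt M0 (α * S0 t - β * M0 t) t)
    (hS0init : S0 0 = S₀) (hM0init : M0 0 = M₀)
    (hS1' : ∀ t : ℝ, 0 ≤ t →
      HasDerivAt S1 (-α * S1 t + β * M1 t - (v * α / (α + β)) * S0 t) t)
    (hM1' : ∀ t : ℝ, 0 ≤ t →
      HasDerivAt M1 (α * S1 t - β * M1 t - (v * α / (α + β) - v) * M0 t) t)
    (hS1init : S1 0 = 0) (hM1init : M1 0 = 0) :
    Tendsto S1 atTop (nhds ((β * v / (α + β) ^ 3) * (β * M₀ - α * (1 + S₀)))) ∧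
    Tendsto M1 atTop (nhds ((α * v / (α + β) ^ 3) * (-α * S₀ + β * (1 + M₀)))) := by
  obtain rfl : S₀ = 1 - M₀ := by linarith
  have hk : 0 < α + β := add_pos hα hβ
  have hmass : ∀ t, 0 ≤ t → S0 t = 1 - M0 t := fun t ht ↦ by
    have := eq_apply_zero_of_hasDerivAt_zero
      (fun s hs ↦ ((hS0' s hs).add (hM0' s hs)).congr_deriv (by ring)) ht
    simp only [Pi.add_apply, hS0init, hM0init] at this
    linarith
  have hM0 : ∀ t, 0 ≤ t → M0 t = α / (α + β) + (M₀ - α / (α + β)) * exp (-(α + β) * t) :=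
    fun t ht ↦ by
      simpa [hM0init] using eq_of_hasDerivAt_relaxation (a := α) (b := 0) hk.ne'
        (fun s hs ↦ (hM0' s hs).congr_deriv (by rw [hmass s hs]; ring)) ht
  have htotal := tendsto_of_hasDerivAt_exp_decay (b := v * (M₀ - α / (α + β))) hk
    (f := fun t ↦ S1 t + M1 t) fun t ht ↦ ((hS1' t ht).add (hM1' t ht)).congr_deriv (by
      rw [hmass t ht, hM0 t ht]; field_simp; ring)
  have hcomb := tendsto_of_hasDerivAt_relaxation (a := -(α * β * v / (α + β)))
    (b := v * (α - β) * (M₀ - α / (α + β))) hk (f := fun t ↦ α * S1 t - β * M1 t)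
    fun t ht ↦ (((hS1' t ht).const_mul α).sub ((hM1' t ht).const_mul β)).congr_deriv (by
      rw [hmass t ht, hM0 t ht]; field_simp; ring)
  simp only [hS1init, hM1init, add_zero, zero_add] at htotal
  constructor
  · convert ((htotal.const_mul β).add hcomb).div_const (α + β) using 2 <;>
    (field_simp; ring)
  · convert ((htotal.const_mul α).sub hcomb).div_const (α + β) using 2 <;>
    (field_simp; ring)

/-- Convergence of the first moments in the co-moving frame of the telegrapher's model. -/
theorem first_moments_converge (α β v S₀ M₀ : ℝ)
    (hα : 0 < α) (hβ : 0 < β) (hv : 0 < v)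
    (hS₀ : 0 ≤ S₀) (hM₀ : 0 ≤ M₀) (hsum : S₀ + M₀ = 1)
    (S0 M0 S1 M1 : ℝ → ℝ)
    (hS0' : ∀ t : ℝ, 0 ≤ t → HasDerivAt S0 (-α * S0 t + β * M0 t) t)
    (hM0' : ∀ t : ℝ, 0 ≤ t → HasDerivAt M0 (α * S0 t - β * M0 t) t)
    (hS0init : S0 0 = S₀) (hM0init : M0 0 = M₀)
    (hS1' : ∀ t : ℝ, 0 ≤ t →
      HasDerivAt S1 (-α * S1 t + β * M1 t - (v * α / (α + β)) * S0 t) t)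
    (hM1' : ∀ t : ℝ, 0 ≤ t →
      HasDerivAt M1 (α * S1 t - β * M1 t - (v * α / (α + β) - v) * M0 t) t)
    (hS1init : S1 0 = 0) (hM1init : M1 0 = 0) :
    Tendsto S1 atTop (nhds ((β * v / (α + β) ^ 3) * (β * M₀ - α * (1 + S₀)))) ∧
    Tendsto M1 atTop (nhds ((α * v / (α + β) ^ 3) * (-α * S₀ + β * (1 + M₀)))) :=
  first_moments_converge_general α β v S₀ M₀ hα hβ hsum S0 M0 S1 M1 hS0' hM0' hS0init hM0init hS1'
    hM1' hS1init hM1init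
end

section
/- Linear growth of the second moments in the co-moving frame: let α, β, v > 0, S₀, M₀ ≥ 0 with S₀ + M₀ = 1, and set c = v·α/(α+β). Suppose 𝒮₀, 𝓜₀ solve the zeroth-moment system with initial data S₀, M₀; suppose 𝒮₁, 𝓜₁ solve the first-moment system 𝒮₁' = −α𝒮₁ + β𝓜₁ − c𝒮₀, 𝓜₁' = α𝒮₁ − β𝓜₁ − (c−v)𝓜₀ with 𝒮₁(0) = 𝓜₁(0) = 0; and suppose 𝒮₂, 𝓜₂ : [0,∞) → ℝ are differentiable with 𝒮₂'(t) = −α·𝒮₂(t) + β·𝓜₂(t) − 2c·𝒮₁(t), 𝓜₂'(t) = α·𝒮₂(t) − β·𝓜₂(t) − 2(c−v)·𝓜₁(t), and 𝒮₂(0) = 𝓜₂(0) = 0. Then as t → ∞, 𝒮₂(t)/t → 2αβ²v²/(α+β)⁴ and 𝓜₂(t)/t → 2α²βv²/(α+β)⁴. -/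
open Real Filter

lemma hasDerivAt_of_eq {f : ℝ → ℝ} {a b x : ℝ} (h : HasDerivAt f a x) (hab : a = b) :
    HasDerivAt f b x := hab ▸ h

noncomputable def Faux (l p₀ p₁ q₀ q₁ q₂ : ℝ) : ℝ → ℝ :=
  fun u => p₀ + p₁ * u + (q₀ + q₁ * u + q₂ * u ^ 2) * Real.exp (-(l * u))

lemma Faux_hasDerivAt (l p₀ p₁ q₀ q₁ q₂ s : ℝ) :
    HasDerivAt (Faux l p₀ p₁ q₀ q₁ q₂)
      (p₁ + (q₁ + 2 * q₂ * s - l * (q₀ + q₁ * s + q₂ * s ^ 2)) * Real.exp (-(l * s))) s := by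
  have h1 : HasDerivAt (fun u : ℝ => -(l * u)) (-l) s := by
    exact hasDerivAt_of_eq ((hasDerivAt_id s).const_mul l).neg (by ring)
  have hE : HasDerivAt (fun u : ℝ => Real.exp (-(l * u))) (Real.exp (-(l * s)) * -l) s := h1.exp
  have ha : HasDerivAt (fun u : ℝ => q₀ + q₁ * u) q₁ s := by
    simpa using ((hasDerivAt_id s).const_mul q₁).const_add q₀
  have hb : HasDerivAt (fun u : ℝ => q₂ * u ^ 2) (q₂ * (2 * s)) s := by
    simpa using (hasDerivAt_pow 2 s).const_mul q₂
  have hq : HasDerivAt (fun u : ℝ => q₀ + q₁ * u + q₂ * u ^ 2) (q₁ + q₂ * (2 * s)) s := ha.add hb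
  have hp : HasDerivAt (fun u : ℝ => p₀ + p₁ * u) p₁ s := by
    simpa using ((hasDerivAt_id s).const_mul p₁).const_add p₀
  have h := hp.add (hq.mul hE)
  exact hasDerivAt_of_eq h (by ring)

lemma ode_uniq (l : ℝ) (g f r : ℝ → ℝ)
    (hg : ∀ t : ℝ, 0 ≤ t → HasDerivAt g (-l * g t + r t) t)
    (hf : ∀ t : ℝ, 0 ≤ t → HasDerivAt f (-l * f t + r t) t)
    (h0 : g 0 = f 0) : ∀ t : ℝ, 0 ≤ t → g t = f t := by
  intro t ht
  have hderiv : ∀ s : ℝ, 0 ≤ s →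
      HasDerivAt (fun u => Real.exp (l * u) * (g u - f u)) 0 s := by
    intro s hs
    have h1 : HasDerivAt (fun u : ℝ => l * u) l s := by
      simpa using (hasDerivAt_id s).const_mul l
    have h := h1.exp.mul ((hg s hs).sub (hf s hs))
    exact hasDerivAt_of_eq h (by simp only [Pi.sub_apply]; ring)
  have hcont : ContinuousOn (fun u => Real.exp (l * u) * (g u - f u)) (Set.Icc 0 t) :=
    fun s hs => (hderiv s hs.1).continuousAt.continuousWithinAt
  have hkey := constant_of_has_deriv_right_zero hcont
      (fun s hs => (hderiv s hs.1).hasDerivWithinAt) t (Set.right_mem_Icc.mpr ht)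
  have h2 : Real.exp (l * t) * (g t - f t) = 0 := by
    rw [hkey]; simp [h0]
  have h3 := (Real.exp_pos (l * t)).ne'
  have := mul_eq_zero.mp h2
  rcases this with h | h
  · exact absurd h h3
  · linarith

lemma tendsto_Faux_div (l p₀ p₁ q₀ q₁ q₂ : ℝ) (hl : 0 < l) :
    Tendsto (fun t => Faux l p₀ p₁ q₀ q₁ q₂ t / t) atTop (nhds p₁) := by
  have hlt : Tendsto (fun t : ℝ => l * t) atTop atTop :=
    Tendsto.const_mul_atTop hl tendsto_id
  have hE : Tendsto (fun t : ℝ => Real.exp (-(l * t))) atTop (nhds 0) :=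
    Real.tendsto_exp_atBot.comp (tendsto_neg_atTop_atBot.comp hlt)
  have htE : Tendsto (fun t : ℝ => t * Real.exp (-(l * t))) atTop (nhds 0) := by
    have h := ((Real.tendsto_pow_mul_exp_neg_atTop_nhds_zero 1).comp hlt).const_mul l⁻¹
    rw [mul_zero] at h
    apply h.congr
    intro t
    simp only [Function.comp_apply, pow_one]
    field_simp
  have hinv : Tendsto (fun t : ℝ => t⁻¹) atTop (nhds (0:ℝ)) := tendsto_inv_atTop_zero
  have hmain : Tendsto (fun t : ℝ => p₀ * t⁻¹ + p₁ +
      (q₀ * (Real.exp (-(l * t)) * t⁻¹) + q₁ * Real.exp (-(l * t)) +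
        q₂ * (t * Real.exp (-(l * t)))))
      atTop (nhds (p₀ * 0 + p₁ + (q₀ * (0 * 0) + q₁ * 0 + q₂ * 0))) :=
    ((hinv.const_mul p₀).add tendsto_const_nhds).add
      ((((hE.mul hinv).const_mul q₀).add (hE.const_mul q₁)).add (htE.const_mul q₂))
  rw [show p₀ * 0 + p₁ + (q₀ * (0 * 0) + q₁ * 0 + q₂ * 0) = p₁ by ring] at hmain
  refine hmain.congr' ?_
  filter_upwards [eventually_ge_atTop 1] with t ht
  have ht0 : t ≠ 0 := by linarith
  simp only [Faux]
  field_simp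

set_option maxHeartbeats 4000000 in
/-- Linear growth of the second moments in the co-moving frame of the telegrapher's model. -/
theorem second_moments_linear_growth (α β v S₀ M₀ : ℝ)
    (hα : 0 < α) (hβ : 0 < β) (hv : 0 < v)
    (hS₀ : 0 ≤ S₀) (hM₀ : 0 ≤ M₀) (hsum : S₀ + M₀ = 1)
    (S0 M0 S1 M1 S2 M2 : ℝ → ℝ)
    (hS0' : ∀ t : ℝ, 0 ≤ t → HasDerivAt S0 (-α * S0 t + β * M0 t) t)
    (hM0' : ∀ t : ℝ, 0 ≤ t → HasDerivAt M0 (α * S0 t - β * M0 t) t)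
    (hS0init : S0 0 = S₀) (hM0init : M0 0 = M₀)
    (hS1' : ∀ t : ℝ, 0 ≤ t →
      HasDerivAt S1 (-α * S1 t + β * M1 t - (v * α / (α + β)) * S0 t) t)
    (hM1' : ∀ t : ℝ, 0 ≤ t →
      HasDerivAt M1 (α * S1 t - β * M1 t - (v * α / (α + β) - v) * M0 t) t)
    (hS1init : S1 0 = 0) (hM1init : M1 0 = 0)
    (hS2' : ∀ t : ℝ, 0 ≤ t →
      HasDerivAt S2 (-α * S2 t + β * M2 t - 2 * (v * α / (α + β)) * S1 t) t)
    (hM2' : ∀ t : ℝ, 0 ≤ t →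
      HasDerivAt M2 (α * S2 t - β * M2 t - 2 * (v * α / (α + β) - v) * M1 t) t)
    (hS2init : S2 0 = 0) (hM2init : M2 0 = 0) :
    Tendsto (fun t => S2 t / t) atTop (nhds (2 * α * β ^ 2 * v ^ 2 / (α + β) ^ 4)) ∧
    Tendsto (fun t => M2 t / t) atTop (nhds (2 * α ^ 2 * β * v ^ 2 / (α + β) ^ 4)) := by
  set l := α + β with hldef
  have hl : 0 < l := by rw [hldef]; positivity
  have hlne : l ≠ 0 := ne_of_gt hl
  have hne : α + β ≠ 0 := by positivity
  set A := S₀ - β / l with hA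
  set a1 := A * v * (β - α) / l with ha1
  set b1 := -(β * (v * A + v * α / l)) / l ^ 2 with hb1
  set K := 2 * v ^ 2 * α * β / l ^ 3 with hK
  set B := -(2 * A * v ^ 2 * (β - α)) / l with hB
  set C1 := K / l - B / l ^ 2 with hC1
  set P := β * K with hP
  set Q := -(β * C1 + 2 * (v * α / l) * b1) with hQ
  set U := -(β * B) / l - 2 * (v * α / l) * a1 with hU
  -- Step 0 : total mass
  have hT0 : ∀ s : ℝ, 0 ≤ s → S0 s + M0 s = 1 := by
    have h := ode_uniq 0 (fun u => S0 u + M0 u) (fun _ => 1) (fun _ => 0)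
      (fun s hs => hasDerivAt_of_eq ((hS0' s hs).add (hM0' s hs)) (by ring))
      (fun s hs => hasDerivAt_of_eq (hasDerivAt_const s 1) (by norm_num))
      (by simp [hS0init, hM0init, hsum])
    exact h
  -- Step 1 : S0 explicit
  have hS0eq : ∀ s : ℝ, 0 ≤ s → S0 s = Faux l (β / l) 0 A 0 0 s := by
    refine ode_uniq l S0 (Faux l (β / l) 0 A 0 0) (fun _ => β) ?_ ?_ ?_
    · intro s hs
      refine hasDerivAt_of_eq (hS0' s hs) ?_
      have hM : M0 s = 1 - S0 s := by linarith [hT0 s hs]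
      rw [hM, hldef]; ring
    · intro s hs
      refine hasDerivAt_of_eq (Faux_hasDerivAt l (β / l) 0 A 0 0 s) ?_
      simp only [Faux]; field_simp; ring
    · simp [Faux, hS0init, hA]
  have hM0eq : ∀ s : ℝ, 0 ≤ s → M0 s = Faux l (α / l) 0 (-A) 0 0 s := by
    intro s hs
    have h1 : M0 s = 1 - S0 s := by linarith [hT0 s hs]
    rw [h1, hS0eq s hs]
    simp only [Faux, hA]
    rw [hldef]; field_simp; ring
  -- Step 2 : S1 + M1 explicit
  have hT1 : ∀ s : ℝ, 0 ≤ s →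
      S1 s + M1 s = Faux l (-(v * A / l)) 0 (v * A / l) 0 0 s := by
    refine ode_uniq 0 (fun u => S1 u + M1 u) (Faux l (-(v * A / l)) 0 (v * A / l) 0 0)
      (fun s => -(v * A) * Real.exp (-(l * s))) ?_ ?_ ?_
    · intro s hs
      refine hasDerivAt_of_eq ((hS1' s hs).add (hM1' s hs)) ?_
      rw [hS0eq s hs, hM0eq s hs]
      simp only [Faux, hA]
      rw [hldef]; field_simp; ring
    · intro s hs
      refine hasDerivAt_of_eq (Faux_hasDerivAt l (-(v * A / l)) 0 (v * A / l) 0 0 s) ?_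
      simp only [Faux]; field_simp; ring
    · simp [Faux, hS1init, hM1init]
  -- Step 3 : S1 explicit
  have hS1eq : ∀ s : ℝ, 0 ≤ s → S1 s = Faux l b1 0 (-b1) a1 0 s := by
    refine ode_uniq l S1 (Faux l b1 0 (-b1) a1 0)
      (fun s => a1 * Real.exp (-(l * s)) + l * b1) ?_ ?_ ?_
    · intro s hs
      refine hasDerivAt_of_eq (hS1' s hs) ?_
      have hM : M1 s = Faux l (-(v * A / l)) 0 (v * A / l) 0 0 s - S1 s := by
        linarith [hT1 s hs]
      rw [hM, hS0eq s hs]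
      simp only [Faux, hA, ha1, hb1]
      rw [hldef]; field_simp; ring
    · intro s hs
      refine hasDerivAt_of_eq (Faux_hasDerivAt l b1 0 (-b1) a1 0 s) ?_
      simp only [Faux]; field_simp; ring
    · simp [Faux, hS1init]
  have hM1eq : ∀ s : ℝ, 0 ≤ s →
      M1 s = Faux l (-(v * A / l) - b1) 0 (v * A / l + b1) (-a1) 0 s := by
    intro s hs
    have h1 : M1 s = Faux l (-(v * A / l)) 0 (v * A / l) 0 0 s - S1 s := by
      linarith [hT1 s hs]
    rw [h1, hS1eq s hs]
    simp only [Faux]; ring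
  -- Step 4 : S2 + M2 explicit
  have hT2 : ∀ s : ℝ, 0 ≤ s →
      S2 s + M2 s = Faux l (-C1) K C1 (-(B / l)) 0 s := by
    refine ode_uniq 0 (fun u => S2 u + M2 u) (Faux l (-C1) K C1 (-(B / l)) 0)
      (fun s => K - K * Real.exp (-(l * s)) + B * s * Real.exp (-(l * s))) ?_ ?_ ?_
    · intro s hs
      refine hasDerivAt_of_eq ((hS2' s hs).add (hM2' s hs)) ?_
      rw [hS1eq s hs, hM1eq s hs]
      simp only [Faux, hA, ha1, hb1, hK, hB]
      rw [hldef]; field_simp; ring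
    · intro s hs
      refine hasDerivAt_of_eq (Faux_hasDerivAt l (-C1) K C1 (-(B / l)) 0 s) ?_
      simp only [Faux, hC1]; field_simp; ring
    · simp [Faux, hS2init, hM2init]
  -- Step 5 : S2 explicit
  have hS2eq : ∀ s : ℝ, 0 ≤ s →
      S2 s = Faux l (Q / l - P / l ^ 2) (P / l) (P / l ^ 2 - Q / l) (-Q) (U / 2) s := by
    refine ode_uniq l S2 (Faux l (Q / l - P / l ^ 2) (P / l) (P / l ^ 2 - Q / l) (-Q) (U / 2))
      (fun s => P * s + Q - Q * Real.exp (-(l * s)) + U * s * Real.exp (-(l * s))) ?_ ?_ ?_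
    · intro s hs
      refine hasDerivAt_of_eq (hS2' s hs) ?_
      have hM : M2 s = Faux l (-C1) K C1 (-(B / l)) 0 s - S2 s := by
        linarith [hT2 s hs]
      rw [hM, hS1eq s hs]
      simp only [Faux, hA, ha1, hb1, hK, hB, hC1, hP, hQ, hU]
      rw [hldef]; field_simp; ring
    · intro s hs
      refine hasDerivAt_of_eq
        (Faux_hasDerivAt l (Q / l - P / l ^ 2) (P / l) (P / l ^ 2 - Q / l) (-Q) (U / 2) s) ?_
      simp only [Faux]; field_simp; ring
    · simp only [Faux, hS2init]
      simp
  have hM2eq : ∀ s : ℝ, 0 ≤ s →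
      M2 s = Faux l (-C1 - (Q / l - P / l ^ 2)) (K - P / l) (C1 - (P / l ^ 2 - Q / l))
        (-(B / l) + Q) (-(U / 2)) s := by
    intro s hs
    have h1 : M2 s = Faux l (-C1) K C1 (-(B / l)) 0 s - S2 s := by
      linarith [hT2 s hs]
    rw [h1, hS2eq s hs]
    simp only [Faux]; ring
  constructor
  · have hlim := tendsto_Faux_div l (Q / l - P / l ^ 2) (P / l) (P / l ^ 2 - Q / l)
      (-Q) (U / 2) hl
    have hval : 2 * α * β ^ 2 * v ^ 2 / l ^ 4 = P / l := by
      simp only [hP, hK]; field_simp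
    rw [hval]
    refine hlim.congr' ?_
    filter_upwards [eventually_ge_atTop 0] with t ht
    rw [hS2eq t ht]
  · have hlim := tendsto_Faux_div l (-C1 - (Q / l - P / l ^ 2)) (K - P / l)
      (C1 - (P / l ^ 2 - Q / l)) (-(B / l) + Q) (-(U / 2)) hl
    have hval : 2 * α ^ 2 * β * v ^ 2 / l ^ 4 = K - P / l := by
      simp only [hP, hK]; rw [hldef]; field_simp; ring
    rw [hval]
    refine hlim.congr' ?_
    filter_upwards [eventually_ge_atTop 0] with t ht
    rw [hM2eq t ht]
end
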